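/- arXiv:2101.07258 — 3 statements merged into one kernel-verified Lean document; each statement's English description precedes it below -/
import Mathlib

section
/- A quasiloopoid G over M satisfies the unities associativity condition (whenever one of x, y, z is a unit and one side of (xy)z = x(yz) is defined, both sides are defined and equal) if and only if α(gh) = α(g) and β(gh) = β(h) for every composable pair (g,h). -/
/-!
Taking `x = α g` (a unit with `β x = α g`, and `x g = g`) in unities associativity forces
`α (g h) = β x = α g`; dually `z = β h` gives `β (g h) = β h`. Conversely, once products keep
their anchors, either side of `(x y) z = x (y z)` is defined exactly when `β x = α y` and
`β y = α z`, and a unit among `x, y, z` acts as an identity on both sides.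
-/

namespace Quasiloopoid

variable {G : Type*} {M : Set G} {α β : G → G} {mul : G → G → G}

def UnitiesAssoc (M : Set G) (α β : G → G) (mul : G → G → G) : Prop :=
  ∀ x y z : G, (x ∈ M ∨ y ∈ M ∨ z ∈ M) →
    ((β x = α y ∧ β (mul x y) = α z) ∨ (β y = α z ∧ β x = α (mul y z))) →
    ((β x = α y ∧ β (mul x y) = α z) ∧ (β y = α z ∧ β x = α (mul y z)) ∧
      mul (mul x y) z = mul x (mul y z))

def PreservesAnchors (α β : G → G) (mul : G → G → G) : Prop :=
  ∀ g h : G, β g = α h → α (mul g h) = α g ∧ β (mul g h) = β h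

lemma mul_eq_right_of_mem (h_unit : ∀ m ∈ M, α m = m ∧ β m = m)
    (h_lunit : ∀ h, mul (α h) h = h) {x y : G} (hx : x ∈ M) (hxy : β x = α y) :
    mul x y = y := by
  rw [← (h_unit x hx).2, hxy, h_lunit]

lemma mul_eq_left_of_mem (h_unit : ∀ m ∈ M, α m = m ∧ β m = m)
    (h_runit : ∀ g, mul g (β g) = g) {x y : G} (hy : y ∈ M) (hxy : β x = α y) :
    mul x y = x := by
  rw [← (h_unit y hy).1, ← hxy, h_runit]

lemma alpha_mul_of_unitiesAssoc (h_α_mem : ∀ g, α g ∈ M)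
    (h_unit : ∀ m ∈ M, α m = m ∧ β m = m) (h_lunit : ∀ h, mul (α h) h = h)
    (H : UnitiesAssoc M α β mul) {g h : G} (hgh : β g = α h) :
    α (mul g h) = α g := by
  have hβα : β (α g) = α g := (h_unit _ (h_α_mem g)).2
  have hleft : β (α g) = α g ∧ β (mul (α g) g) = α h := ⟨hβα, by rwa [h_lunit]⟩
  have hright := (H (α g) g h (Or.inl (h_α_mem g)) (Or.inl hleft)).2.1.2
  rw [← hright, hβα]

lemma beta_mul_of_unitiesAssoc (h_β_mem : ∀ g, β g ∈ M)
    (h_unit : ∀ m ∈ M, α m = m ∧ β m = m) (h_runit : ∀ g, mul g (β g) = g)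
    (H : UnitiesAssoc M α β mul) {g h : G} (hgh : β g = α h) :
    β (mul g h) = β h := by
  have hαβ : α (β h) = β h := (h_unit _ (h_β_mem h)).1
  have hright : β h = α (β h) ∧ β g = α (mul h (β h)) := ⟨hαβ.symm, by rwa [h_runit]⟩
  have hleft := (H g h (β h) (Or.inr (Or.inr (h_β_mem h))) (Or.inr hright)).1.2
  rw [hleft, hαβ]

lemma preservesAnchors_of_unitiesAssoc (h_α_mem : ∀ g, α g ∈ M) (h_β_mem : ∀ g, β g ∈ M)
    (h_unit : ∀ m ∈ M, α m = m ∧ β m = m) (h_runit : ∀ g, mul g (β g) = g)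
    (h_lunit : ∀ h, mul (α h) h = h) (H : UnitiesAssoc M α β mul) :
    PreservesAnchors α β mul := fun _ _ hgh =>
  ⟨alpha_mul_of_unitiesAssoc h_α_mem h_unit h_lunit H hgh,
    beta_mul_of_unitiesAssoc h_β_mem h_unit h_runit H hgh⟩

section PreservesAnchors

variable (H : PreservesAnchors α β mul) {x y z : G}
include H

lemma PreservesAnchors.composable_mul_left_iff :
    (β x = α y ∧ β (mul x y) = α z) ↔ (β x = α y ∧ β y = α z) :=
  and_congr_right fun hxy => by rw [(H x y hxy).2]

lemma PreservesAnchors.composable_mul_right_iff :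
    (β y = α z ∧ β x = α (mul y z)) ↔ (β x = α y ∧ β y = α z) := by
  rw [and_comm]
  exact and_congr_left fun hyz => by rw [(H y z hyz).1]

lemma PreservesAnchors.mul_assoc_of_mem (h_unit : ∀ m ∈ M, α m = m ∧ β m = m)
    (h_runit : ∀ g, mul g (β g) = g) (h_lunit : ∀ h, mul (α h) h = h)
    (hmem : x ∈ M ∨ y ∈ M ∨ z ∈ M) (hxy : β x = α y) (hyz : β y = α z) :
    mul (mul x y) z = mul x (mul y z) := by
  rcases hmem with hx | hy | hz
  · have hx_yz : β x = α (mul y z) := by rw [(H y z hyz).1, hxy]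
    rw [mul_eq_right_of_mem h_unit h_lunit hx hxy,
      mul_eq_right_of_mem h_unit h_lunit hx hx_yz]
  · rw [mul_eq_left_of_mem h_unit h_runit hy hxy, mul_eq_right_of_mem h_unit h_lunit hy hyz]
  · have hxy_z : β (mul x y) = α z := by rw [(H x y hxy).2, hyz]
    rw [mul_eq_left_of_mem h_unit h_runit hz hyz,
      mul_eq_left_of_mem h_unit h_runit hz hxy_z]

lemma PreservesAnchors.unitiesAssoc (h_unit : ∀ m ∈ M, α m = m ∧ β m = m)
    (h_runit : ∀ g, mul g (β g) = g) (h_lunit : ∀ h, mul (α h) h = h) :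
    UnitiesAssoc M α β mul := by
  intro x y z hmem hdef
  have hcomp : β x = α y ∧ β y = α z :=
    hdef.elim H.composable_mul_left_iff.1 H.composable_mul_right_iff.1
  exact ⟨H.composable_mul_left_iff.2 hcomp, H.composable_mul_right_iff.2 hcomp,
    H.mul_assoc_of_mem h_unit h_runit h_lunit hmem hcomp.1 hcomp.2⟩

end PreservesAnchors

end Quasiloopoid

/-- A (algebraic) quasiloopoid over `M`:  `G` with `α, β : G → G` taking values in the
set of units `M ⊆ G`, a (total representation of the partial) multiplication `mul`,
where `mul g h` is *defined* exactly when `β g = α h`; units satisfy `α m = β m = m`,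
`g * β g = g` and `α h * h = h`.  The *unities associativity* condition says: whenever
one of `x, y, z` is a unit and one side of `(x y) z = x (y z)` is defined, then both
sides are defined and equal.  Theorem: a quasiloopoid satisfies unities associativity
iff `α (g h) = α g` and `β (g h) = β h` for every composable pair `(g, h)`. -/
theorem quasiloopoid_unities_assoc_iff_anchor
    {G : Type*} (M : Set G) (α β : G → G) (mul : G → G → G)
    (h_α_mem : ∀ g, α g ∈ M) (h_β_mem : ∀ g, β g ∈ M)
    (h_unit : ∀ m ∈ M, α m = m ∧ β m = m)
    (h_runit : ∀ g, mul g (β g) = g)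
    (h_lunit : ∀ h, mul (α h) h = h) :
    (∀ x y z : G, (x ∈ M ∨ y ∈ M ∨ z ∈ M) →
        ((β x = α y ∧ β (mul x y) = α z) ∨ (β y = α z ∧ β x = α (mul y z))) →
        ((β x = α y ∧ β (mul x y) = α z) ∧ (β y = α z ∧ β x = α (mul y z)) ∧
          mul (mul x y) z = mul x (mul y z)))
      ↔
    (∀ g h : G, β g = α h → α (mul g h) = α g ∧ β (mul g h) = β h) :=
  ⟨Quasiloopoid.preservesAnchors_of_unitiesAssoc h_α_mem h_β_mem h_unit h_runit h_lunit,
    fun H => Quasiloopoid.PreservesAnchors.unitiesAssoc H h_unit h_runit h_lunit⟩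
end

section
/- Let G' be a loop with unit e and N a set. Then G = G' × N × N with source α(x,s,t) = (e,s,s), target β(x,s,t) = (e,t,t), unit set M = {(e,s,s) : s ∈ N}, and multiplication (x,s,t)•(y,t,r) = (xy,s,r) is a loopoid: units act as identities, α(g•h) = α(g), β(g•h) = β(h), and left/right translations between the corresponding fibers are bijections. Moreover, if G' is an inverse loop, then ι(x,s,t) = (x⁻¹,t,s) makes G an I.P. loopoid. -/
/-! The structure is the product of the loop `G'` with the pair groupoid `N × N`, which only
records source and target.  Two elements are composable exactly when the target index of the first
is the source index of the second, and then each loopoid axiom is the corresponding loop axiom in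
the first coordinate. -/

section

variable {G' N : Type*} {mul' : G' → G' → G'} {e : G'}
  {α β : G' × N × N → G' × N × N} {mul : G' × N × N → G' × N × N → G' × N × N}

structure IsLoopPairProduct (mul' : G' → G' → G') (e : G') (α β : G' × N × N → G' × N × N)
    (mul : G' × N × N → G' × N × N → G' × N × N) : Prop where
  source_apply : ∀ x s t, α (x, s, t) = (e, s, s)
  target_apply : ∀ x s t, β (x, s, t) = (e, t, t)
  mul_apply : ∀ (x y : G') (s t r : N), mul (x, s, t) (y, t, r) = (mul' x y, s, r)

namespace IsLoopPairProduct

variable (hG : IsLoopPairProduct mul' e α β mul)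
include hG

theorem target_eq_source_iff {x y : G'} {s t t' r : N} :
    β (x, s, t) = α (y, t', r) ↔ t = t' := by
  simp [hG.source_apply, hG.target_apply]

theorem mul_target (h_id_right : ∀ a, mul' a e = a) (g : G' × N × N) : mul g (β g) = g := by
  obtain ⟨x, s, t⟩ := g
  rw [hG.target_apply, hG.mul_apply, h_id_right]

theorem source_mul (h_id_left : ∀ a, mul' e a = a) (g : G' × N × N) : mul (α g) g = g := by
  obtain ⟨x, s, t⟩ := g
  rw [hG.source_apply, hG.mul_apply, h_id_left]

theorem source_mul_target_mul {g h : G' × N × N} (hc : β g = α h) :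
    α (mul g h) = α g ∧ β (mul g h) = β h := by
  obtain ⟨x, s, t⟩ := g
  obtain ⟨y, t', r⟩ := h
  obtain rfl := hG.target_eq_source_iff.1 hc
  simp [hG.mul_apply, hG.source_apply, hG.target_apply]

theorem left_cancel (h_left_inj : ∀ a, Function.Injective (mul' a)) {g h h' : G' × N × N}
    (hh : α h = β g) (hh' : α h' = β g) (heq : mul g h = mul g h') : h = h' := by
  obtain ⟨x, s, t⟩ := g
  obtain ⟨y, t₁, r⟩ := h
  obtain ⟨y', t₂, r'⟩ := h'
  obtain rfl := (hG.target_eq_source_iff.1 hh.symm).symm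
  obtain rfl := (hG.target_eq_source_iff.1 hh'.symm).symm
  simp only [hG.mul_apply, Prod.mk.injEq, true_and] at heq
  rw [h_left_inj x heq.1, heq.2]

theorem exists_mul_left_eq (h_left_surj : ∀ a, Function.Surjective (mul' a))
    {g k : G' × N × N} (hk : α k = α g) : ∃ h, α h = β g ∧ mul g h = k := by
  obtain ⟨x, s, t⟩ := g
  obtain ⟨z, s', r⟩ := k
  simp only [hG.source_apply, Prod.mk.injEq, true_and, and_self] at hk
  subst hk
  obtain ⟨y, rfl⟩ := h_left_surj x z
  exact ⟨(y, t, r), by rw [hG.source_apply, hG.target_apply], hG.mul_apply ..⟩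

theorem right_cancel (h_right_inj : ∀ a, Function.Injective (mul' · a)) {h g g' : G' × N × N}
    (hg : β g = α h) (hg' : β g' = α h) (heq : mul g h = mul g' h) : g = g' := by
  obtain ⟨y, t, r⟩ := h
  obtain ⟨x, s₁, t₁⟩ := g
  obtain ⟨x', s₂, t₂⟩ := g'
  obtain rfl := hG.target_eq_source_iff.1 hg
  obtain rfl := hG.target_eq_source_iff.1 hg'
  simp only [hG.mul_apply, Prod.mk.injEq, and_true] at heq
  rw [h_right_inj y heq.1, heq.2]

theorem exists_mul_right_eq (h_right_surj : ∀ a, Function.Surjective (mul' · a))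
    {h k : G' × N × N} (hk : β k = β h) : ∃ g, β g = α h ∧ mul g h = k := by
  obtain ⟨y, t, r⟩ := h
  obtain ⟨z, s, r'⟩ := k
  simp only [hG.target_apply, Prod.mk.injEq, true_and, and_self] at hk
  subst hk
  obtain ⟨x, rfl⟩ := h_right_surj y z
  exact ⟨(x, s, t), by rw [hG.source_apply, hG.target_apply], hG.mul_apply ..⟩

variable {inv' : G' → G'} {ι : G' × N × N → G' × N × N}
  (h_ι : ∀ x s t, ι (x, s, t) = (inv' x, t, s))
include h_ι

theorem target_inv_source_inv (g : G' × N × N) : β (ι g) = α g ∧ α (ι g) = β g := by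
  obtain ⟨x, s, t⟩ := g
  simp [h_ι, hG.source_apply, hG.target_apply]

theorem inv_mul_cancel_left (h_inv_left : ∀ a b, mul' (inv' a) (mul' a b) = b)
    {g h : G' × N × N} (hc : β g = α h) : mul (ι g) (mul g h) = h := by
  obtain ⟨x, s, t⟩ := g
  obtain ⟨y, t', r⟩ := h
  obtain rfl := hG.target_eq_source_iff.1 hc
  rw [hG.mul_apply, h_ι, hG.mul_apply, h_inv_left]

theorem mul_inv_cancel_right (h_inv_right : ∀ a b, mul' (mul' b a) (inv' a) = b)
    {g h : G' × N × N} (hc : β h = α g) : mul (mul h g) (ι g) = h := by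
  obtain ⟨x, t', r⟩ := g
  obtain ⟨y, s, t⟩ := h
  obtain rfl := hG.target_eq_source_iff.1 hc
  rw [hG.mul_apply, h_ι, hG.mul_apply, h_inv_right]

end IsLoopPairProduct

end

theorem loop_times_pair_groupoid_is_loopoid_general
    {G' N : Type*} (mul' : G' → G' → G') (e : G')
    (h_id_left : ∀ a, mul' e a = a)
    (h_id_right : ∀ a, mul' a e = a)
    (h_left_bij : ∀ g, Function.Bijective (fun x => mul' g x))
    (h_right_bij : ∀ g, Function.Bijective (fun x => mul' x g))
    -- structure maps on G = G' × N × N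
    (α β : G' × N × N → G' × N × N)
    (mul : G' × N × N → G' × N × N → G' × N × N)
    (h_α : ∀ x s t, α (x, s, t) = (e, s, s))
    (h_β : ∀ x s t, β (x, s, t) = (e, t, t))
    (h_mul : ∀ (x y : G') (s t r : N), mul (x, s, t) (y, t, r) = (mul' x y, s, r)) :
    -- units act as identities
    (∀ g, mul g (β g) = g ∧ mul (α g) g = g) ∧
    -- anchor conditions
    (∀ g h, β g = α h → α (mul g h) = α g ∧ β (mul g h) = β h) ∧
    -- left translations l_g : {h | α h = β g} → {h | α h = α g} are bijections
    (∀ g h h', α h = β g → α h' = β g → mul g h = mul g h' → h = h') ∧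
    (∀ g k, α k = α g → ∃ h, α h = β g ∧ mul g h = k) ∧
    -- right translations r_h : {g | β g = α h} → {g | β g = β h} are bijections
    (∀ h g g', β g = α h → β g' = α h → mul g h = mul g' h → g = g') ∧
    (∀ h k, β k = β h → ∃ g, β g = α h ∧ mul g h = k) ∧
    -- inverse loop on G' gives an I.P. loopoid structure
    (∀ inv' : G' → G',
      (∀ a b, mul' (inv' a) (mul' a b) = b) →
      (∀ a b, mul' (mul' b a) (inv' a) = b) →
      ∀ ι : G' × N × N → G' × N × N,
        (∀ x s t, ι (x, s, t) = (inv' x, t, s)) →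
        (∀ g, β (ι g) = α g ∧ α (ι g) = β g) ∧
        (∀ g h, β g = α h → mul (ι g) (mul g h) = h) ∧
        (∀ g h, β h = α g → mul (mul h g) (ι g) = h)) := by
  have hG : IsLoopPairProduct mul' e α β mul := ⟨h_α, h_β, h_mul⟩
  refine ⟨fun g => ⟨hG.mul_target h_id_right g, hG.source_mul h_id_left g⟩,
    fun _ _ => hG.source_mul_target_mul,
    fun _ _ _ => hG.left_cancel fun a => (h_left_bij a).1,
    fun _ _ => hG.exists_mul_left_eq fun a => (h_left_bij a).2,
    fun _ _ _ => hG.right_cancel fun a => (h_right_bij a).1,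
    fun _ _ => hG.exists_mul_right_eq fun a => (h_right_bij a).2, ?_⟩
  intro inv' h_inv_left h_inv_right ι h_ι
  exact ⟨hG.target_inv_source_inv h_ι, fun _ _ => hG.inv_mul_cancel_left h_ι h_inv_left,
    fun _ _ => hG.mul_inv_cancel_right h_ι h_inv_right⟩

/-- Let `G'` be a loop with unit `e` and `N` a set.  Then `G = G' × N × N` with
source `α (x,s,t) = (e,s,s)`, target `β (x,s,t) = (e,t,t)`, units
`M = {(e,s,s) : s ∈ N}`, and multiplication `(x,s,t) • (y,t,r) = (x y, s, r)`
(composable iff `t = t'`, i.e. `β g = α h`) is a loopoid: units act as identities,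
`α (g • h) = α g`, `β (g • h) = β h`, and left/right translations between the
corresponding fibers are bijections.  Moreover, if `G'` is an inverse loop with
inversion `inv'`, then `ι (x,s,t) = (inv' x, t, s)` makes `G` an I.P. loopoid. -/
theorem loop_times_pair_groupoid_is_loopoid
    {G' N : Type*} (mul' : G' → G' → G') (e : G')
    (h_id_left : ∀ a, mul' e a = a)
    (h_id_right : ∀ a, mul' a e = a)
    (h_left_bij : ∀ g, Function.Bijective (fun x => mul' g x))
    (h_right_bij : ∀ g, Function.Bijective (fun x => mul' x g))
    -- structure maps on G = G' × N × N
    (α β : G' × N × N → G' × N × N) (M : Set (G' × N × N))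
    (mul : G' × N × N → G' × N × N → G' × N × N)
    (h_α : ∀ x s t, α (x, s, t) = (e, s, s))
    (h_β : ∀ x s t, β (x, s, t) = (e, t, t))
    (h_M : M = {g | ∃ s, g = (e, s, s)})
    (h_mul : ∀ (x y : G') (s t r : N), mul (x, s, t) (y, t, r) = (mul' x y, s, r)) :
    -- units act as identities
    (∀ g, mul g (β g) = g ∧ mul (α g) g = g) ∧
    -- anchor conditions
    (∀ g h, β g = α h → α (mul g h) = α g ∧ β (mul g h) = β h) ∧
    -- left translations l_g : {h | α h = β g} → {h | α h = α g} are bijections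
    (∀ g h h', α h = β g → α h' = β g → mul g h = mul g h' → h = h') ∧
    (∀ g k, α k = α g → ∃ h, α h = β g ∧ mul g h = k) ∧
    -- right translations r_h : {g | β g = α h} → {g | β g = β h} are bijections
    (∀ h g g', β g = α h → β g' = α h → mul g h = mul g' h → g = g') ∧
    (∀ h k, β k = β h → ∃ g, β g = α h ∧ mul g h = k) ∧
    -- inverse loop on G' gives an I.P. loopoid structure
    (∀ inv' : G' → G',
      (∀ a b, mul' (inv' a) (mul' a b) = b) →
      (∀ a b, mul' (mul' b a) (inv' a) = b) →
      ∀ ι : G' × N × N → G' × N × N,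
        (∀ x s t, ι (x, s, t) = (inv' x, t, s)) →
        (∀ g, β (ι g) = α g ∧ α (ι g) = β g) ∧
        (∀ g h, β g = α h → mul (ι g) (mul g h) = h) ∧
        (∀ g h, β h = α g → mul (mul h g) (ι g) = h)) :=
  loop_times_pair_groupoid_is_loopoid_general mul' e h_id_left h_id_right h_left_bij h_right_bij α β
    mul h_α h_β h_mul
end

section
/- Let φ : ℝ → ℝ be an odd bijection and let G = {((a₁,b₁),(a₂,b₂)) ∈ ℝ²×ℝ² : a₁ − a₂ = φ(b₁ − b₂)} with α(g) = (a₁,b₁), β(g) = (a₂,b₂), units {((a,b),(a,b))}, and multiplication ((a₁,b₁),(a₂,b₂)) • ((a₂,b₂),(a₃,b₃)) = ((a₁,b₁),(a₁+φ(b₃−b₁), b₃)). Then the product of two elements of G lies in G, units are two-sided identities, and the map ι_l((a₁,b₁),(a₂,b₂)) = ((a₂,b₂),(a₁,b₁)) is a left inverse: ι_l(g) • (g • h) = h for all composable g, h ∈ G. -/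
/-!
Since `φ` is odd, the defining relation `a₁ - a₂ = φ (b₁ - b₂)` of `G` can be solved for
`a₂ = a₁ + φ (b₂ - b₁)`: an element of `G` is determined by its source and the second coordinate
of its target. The product `g • h` is precisely the element of `G` with source `α g` and target
second coordinate that of `β h`, and all four claims follow by comparing sources and targets.
-/

namespace OddQuasiloopoid

def carrier (φ : ℝ → ℝ) : Set ((ℝ × ℝ) × (ℝ × ℝ)) :=
  {g | g.1.1 - g.2.1 = φ (g.1.2 - g.2.2)}

def arrow (φ : ℝ → ℝ) (s : ℝ × ℝ) (b : ℝ) : (ℝ × ℝ) × (ℝ × ℝ) :=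
  (s, (s.1 + φ (b - s.2), b))

variable {φ : ℝ → ℝ}

theorem sub_eq_apply_sub_iff (hφ : Function.Odd φ) {a₁ b₁ a₂ b₂ : ℝ} :
    a₁ - a₂ = φ (b₁ - b₂) ↔ a₂ = a₁ + φ (b₂ - b₁) := by
  rw [← neg_sub b₁ b₂, hφ]
  constructor <;> intro h <;> linarith

theorem arrow_mem (hφ : Function.Odd φ) (s : ℝ × ℝ) (b : ℝ) : arrow φ s b ∈ carrier φ :=
  (sub_eq_apply_sub_iff hφ).2 rfl

theorem arrow_eq_of_mem (hφ : Function.Odd φ) {g : (ℝ × ℝ) × (ℝ × ℝ)} (hg : g ∈ carrier φ) :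
    arrow φ g.1 g.2.2 = g := by
  rw [arrow, ← (sub_eq_apply_sub_iff hφ).1 hg]

end OddQuasiloopoid

open OddQuasiloopoid in
theorem odd_bijection_left_inverse_quasiloopoid_general
    (φ : ℝ → ℝ) (h_odd : ∀ x, φ (-x) = - φ x)
    (G : Set ((ℝ × ℝ) × (ℝ × ℝ)))
    (h_G : G = {g | g.1.1 - g.2.1 = φ (g.1.2 - g.2.2)})
    (mul : (ℝ × ℝ) × (ℝ × ℝ) → (ℝ × ℝ) × (ℝ × ℝ) → (ℝ × ℝ) × (ℝ × ℝ))
    (h_mul : ∀ g h, mul g h = (g.1, (g.1.1 + φ (h.2.2 - g.1.2), h.2.2)))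
    (ι : (ℝ × ℝ) × (ℝ × ℝ) → (ℝ × ℝ) × (ℝ × ℝ))
    (h_ι : ∀ g, ι g = (g.2, g.1)) :
    -- closure under the partial multiplication
    (∀ g ∈ G, ∀ h ∈ G, g.2 = h.1 → mul g h ∈ G) ∧
    -- units are two-sided identities
    (∀ a b : ℝ, ∀ h ∈ G, ((a, b), (a, b)).2 = h.1 → mul ((a, b), (a, b)) h = h) ∧
    (∀ g ∈ G, mul g (g.2, g.2) = g) ∧
    -- left inverse property
    (∀ g ∈ G, ∀ h ∈ G, g.2 = h.1 → mul (ι g) (mul g h) = h) := by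
  change G = carrier φ at h_G
  subst h_G
  have h_arrow : ∀ g h, mul g h = arrow φ g.1 h.2.2 := h_mul
  refine ⟨fun g _ h _ _ => ?_, fun a b h hh hc => ?_, fun g hg => ?_, fun g _ h hh hc => ?_⟩
  · exact h_arrow g h ▸ arrow_mem h_odd _ _
  · rw [h_arrow, show ((a, b), (a, b)).1 = h.1 from hc, arrow_eq_of_mem h_odd hh]
  · rw [h_arrow, arrow_eq_of_mem h_odd hg]
  · rw [h_arrow, h_arrow, h_ι]
    change arrow φ g.2 h.2.2 = h
    rw [hc, arrow_eq_of_mem h_odd hh]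

/-- Let `φ : ℝ → ℝ` be an odd bijection and
`G = {((a₁,b₁),(a₂,b₂)) : a₁ − a₂ = φ (b₁ − b₂)} ⊆ ℝ² × ℝ²`, with source
`α g = g.1`, target `β g = g.2`, units `((a,b),(a,b))`, and multiplication
`((a₁,b₁),(a₂,b₂)) • ((a₂,b₂),(a₃,b₃)) = ((a₁,b₁), (a₁ + φ(b₃ − b₁), b₃))`
(composable iff `g.2 = h.1`).  Then the product of two composable elements of `G`
lies in `G`, units are two-sided identities, and
`ι_l ((a₁,b₁),(a₂,b₂)) = ((a₂,b₂),(a₁,b₁))` is a left inverse: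
`ι_l g • (g • h) = h` for all composable `g, h ∈ G`. -/
theorem odd_bijection_left_inverse_quasiloopoid
    (φ : ℝ → ℝ) (h_odd : ∀ x, φ (-x) = - φ x) (h_bij : Function.Bijective φ)
    (G : Set ((ℝ × ℝ) × (ℝ × ℝ)))
    (h_G : G = {g | g.1.1 - g.2.1 = φ (g.1.2 - g.2.2)})
    (mul : (ℝ × ℝ) × (ℝ × ℝ) → (ℝ × ℝ) × (ℝ × ℝ) → (ℝ × ℝ) × (ℝ × ℝ))
    (h_mul : ∀ g h, mul g h = (g.1, (g.1.1 + φ (h.2.2 - g.1.2), h.2.2)))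
    (ι : (ℝ × ℝ) × (ℝ × ℝ) → (ℝ × ℝ) × (ℝ × ℝ))
    (h_ι : ∀ g, ι g = (g.2, g.1)) :
    -- closure under the partial multiplication
    (∀ g ∈ G, ∀ h ∈ G, g.2 = h.1 → mul g h ∈ G) ∧
    -- units are two-sided identities
    (∀ a b : ℝ, ∀ h ∈ G, ((a, b), (a, b)).2 = h.1 → mul ((a, b), (a, b)) h = h) ∧
    (∀ g ∈ G, mul g (g.2, g.2) = g) ∧
    -- left inverse property
    (∀ g ∈ G, ∀ h ∈ G, g.2 = h.1 → mul (ι g) (mul g h) = h) :=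
  odd_bijection_left_inverse_quasiloopoid_general φ h_odd G h_G mul h_mul ι h_ι
end
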